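/- arXiv:1902.04739 — 3 statements merged into one kernel-verified Lean document; each statement's English description precedes it below -/
import Mathlib

section
/- Let N ≥ 1 and let α₁, β₁, γ₁, ρ₁ ∈ [1, ∞) satisfy α₁ ≤ ρ₁ ≤ β₁ and 1/α₁ + 1/β₁ + 1/γ₁ = 1 + 1/ρ₁. Let k : ℝ^N × ℝ^N → ℝ be measurable with A := (∫ (∫ |k(x,y)|^{α₁} dy)^{β₁/α₁} dx)^{1/β₁} < ∞ and B := (∫ (∫ |k(x,y)|^{α₁} dx)^{β₁/α₁} dy)^{1/β₁} < ∞. Then for every measurable f : ℝ^N → ℝ with finite L^{γ₁} norm, the function x ↦ ∫_{ℝ^N} |k(x,y)| |f(y)| dy has L^{ρ₁} norm at most max(A, B) · ‖f‖_{L^{γ₁}}. -/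
/-!
Pick `θ ∈ [0, 1]` with `θ / β + (1 - θ) / α = 1 / ρ`; the exponent relation then says
`1 / γ = θ (1 - 1 / α) + (1 - θ) (1 - 1 / β)`, so `|f| = u ^ θ * v ^ (1 - θ)` with
`u = |f| ^ (γ (1 - 1 / α))` and `v = |f| ^ (γ (1 - 1 / β))`. Hölder in `y` gives
`K|f| ≤ (Ku) ^ θ (Kv) ^ (1 - θ)` pointwise, and Hölder in `x` bounds the `L^ρ` norm of the right
side by `‖Ku‖_β ^ θ ‖Kv‖_α ^ (1 - θ)`. Hölder with exponents `α, α'` in `y` gives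
`‖Ku‖_β ≤ A ‖f‖_γ ^ (γ (1 - 1 / α))`, while Minkowski's integral inequality followed by Hölder
with exponents `β, β'` gives `‖Kv‖_α ≤ B ‖f‖_γ ^ (γ (1 - 1 / β))`.
-/

open MeasureTheory
open scoped ENNReal

namespace ENNReal

theorem rpow_one_div_le_of_le_mul_rpow {p q : ℝ} (hpq : p.HolderConjugate q) {I R : ℝ≥0∞}
    (hI : I ≠ ⊤) (h : I ≤ R * I ^ (1 / q)) : I ^ (1 / p) ≤ R := by
  rcases eq_or_ne I 0 with rfl | hI0
  · simp [zero_rpow_of_pos, hpq.pos]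
  have hsplit : I ^ (1 / p) * I ^ (1 / q) = I := by
    rw [← rpow_add _ _ hI0 hI, one_div, one_div, hpq.inv_add_inv_eq_one, rpow_one]
  refine (ENNReal.mul_le_mul_iff_left ?_ ?_).mp (hsplit.le.trans h)
  · simp [rpow_eq_zero_iff, hI0, hI]
  · exact rpow_ne_top_of_nonneg (one_div_nonneg.2 hpq.symm.nonneg) hI

theorem iSup_min_natCast_rpow {p : ℝ} (hp : 0 < p) (a : ℝ≥0∞) :
    ⨆ n : ℕ, min a n ^ p = a ^ p := by
  have ha : ⨆ n : ℕ, min a n = a := by rw [← inf_iSup_eq, iSup_natCast, inf_top_eq]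
  calc ⨆ n : ℕ, min a n ^ p = orderIsoRpow p hp (⨆ n : ℕ, min a n) :=
        ((orderIsoRpow p hp).map_iSup _).symm
    _ = a ^ p := by rw [ha, orderIsoRpow_apply]

theorem mul_rpow_mul_mul_rpow_le_max (a b c : ℝ≥0∞) {θ s t : ℝ} (hθ₀ : 0 ≤ θ) (hθ₁ : θ ≤ 1)
    (hs : 0 ≤ s) (ht : 0 ≤ t) :
    (a * c ^ s) ^ θ * (b * c ^ t) ^ (1 - θ) ≤ max a b * c ^ (s * θ + t * (1 - θ)) := by
  have hθ₁' : 0 ≤ 1 - θ := by linarith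
  have hmax : a ^ θ * b ^ (1 - θ) ≤ max a b := by
    calc a ^ θ * b ^ (1 - θ) ≤ max a b ^ θ * max a b ^ (1 - θ) :=
          mul_le_mul' (rpow_le_rpow (le_max_left a b) hθ₀) (rpow_le_rpow (le_max_right a b) hθ₁')
      _ = max a b := by rw [← rpow_add_of_nonneg _ _ hθ₀ hθ₁', add_sub_cancel, rpow_one]
  calc (a * c ^ s) ^ θ * (b * c ^ t) ^ (1 - θ)
      = a ^ θ * b ^ (1 - θ) * c ^ (s * θ + t * (1 - θ)) := by
        rw [mul_rpow_of_nonneg _ _ hθ₀, mul_rpow_of_nonneg _ _ hθ₁', ← rpow_mul c, ← rpow_mul c,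
          rpow_add_of_nonneg _ _ (mul_nonneg hs hθ₀) (mul_nonneg ht hθ₁')]
        ring
    _ ≤ max a b * c ^ (s * θ + t * (1 - θ)) := by gcongr

end ENNReal

theorem exists_div_add_one_sub_div_eq_one_div {α β ρ : ℝ} (hα : 0 < α) (h₁ : α ≤ ρ)
    (h₂ : ρ ≤ β) : ∃ θ : ℝ, 0 ≤ θ ∧ θ ≤ 1 ∧ θ / β + (1 - θ) / α = 1 / ρ := by
  have hρ : 1 / ρ ∈ segment ℝ (1 / β) (1 / α) := by
    rw [segment_eq_Icc (one_div_le_one_div_of_le hα (h₁.trans h₂))]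
    exact ⟨one_div_le_one_div_of_le (hα.trans_le h₁) h₂, one_div_le_one_div_of_le hα h₁⟩
  obtain ⟨θ, θ', hθ, hθ', hsum, hcomb⟩ := hρ
  obtain rfl : θ' = 1 - θ := by linarith
  refine ⟨θ, hθ, by linarith, ?_⟩
  rw [← hcomb, smul_eq_mul, smul_eq_mul]
  ring

section Holder

variable {X : Type*} [MeasurableSpace X] {μ : Measure X}

theorem lintegral_mul_rpow_le_of_one_le {p : ℝ} (hp : 1 ≤ p) (γ : ℝ) {g F : X → ℝ≥0∞}
    (hg : AEMeasurable g μ) (hF : AEMeasurable F μ) :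
    ∫⁻ x, g x * F x ^ (γ * (1 - 1 / p)) ∂μ ≤
      (∫⁻ x, g x ^ p ∂μ) ^ (1 / p) * (∫⁻ x, F x ^ γ ∂μ) ^ (1 - 1 / p) := by
  rcases hp.eq_or_lt with rfl | hp
  · simp
  have hpq := Real.HolderConjugate.conjExponent hp
  have hq : 1 / p.conjExponent = 1 - 1 / p := by
    rw [eq_sub_iff_add_eq, add_comm, one_div, one_div, hpq.inv_add_inv_eq_one]
  have hFq : ∀ x, (F x ^ (γ * (1 - 1 / p))) ^ p.conjExponent = F x ^ γ := fun x => by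
    rw [← ENNReal.rpow_mul, ← hq, mul_assoc, one_div_mul_cancel hpq.symm.ne_zero, mul_one]
  simpa only [Pi.mul_apply, hFq, hq] using
    ENNReal.lintegral_mul_le_Lp_mul_Lq μ hpq hg (hF.pow_const (γ * (1 - 1 / p)))

theorem lintegral_mul_rpow_mul_rpow_le {θ : ℝ} (hθ₀ : 0 ≤ θ) (hθ₁ : θ ≤ 1)
    {K u v : X → ℝ≥0∞} (hK : AEMeasurable K μ) (hu : AEMeasurable u μ) (hv : AEMeasurable v μ) :
    ∫⁻ x, K x * (u x ^ θ * v x ^ (1 - θ)) ∂μ ≤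
      (∫⁻ x, K x * u x ∂μ) ^ θ * (∫⁻ x, K x * v x ∂μ) ^ (1 - θ) := by
  have hsplit : ∀ x, K x * (u x ^ θ * v x ^ (1 - θ)) =
      (K x * u x) ^ θ * (K x * v x) ^ (1 - θ) := fun x => by
    rw [ENNReal.mul_rpow_of_nonneg _ _ hθ₀, ENNReal.mul_rpow_of_nonneg _ _ (by linarith)]
    nth_rw 1 [← ENNReal.rpow_one (K x), ← add_sub_cancel θ 1,
      ENNReal.rpow_add_of_nonneg _ _ hθ₀ (by linarith)]
    ring
  simp_rw [hsplit]
  exact ENNReal.lintegral_mul_norm_pow_le (hK.mul hu) (hK.mul hv) hθ₀ (by linarith) (by ring)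

theorem lintegral_rpow_mul_rpow_rpow_le {θ a b r : ℝ} (hθ₀ : 0 ≤ θ) (hθ₁ : θ ≤ 1)
    (ha : 0 < a) (hb : 0 < b) (hr : 0 < r) (habr : θ / b + (1 - θ) / a = 1 / r)
    {f g : X → ℝ≥0∞} (hf : AEMeasurable f μ) (hg : AEMeasurable g μ) :
    (∫⁻ x, (f x ^ θ * g x ^ (1 - θ)) ^ r ∂μ) ^ (1 / r) ≤
      ((∫⁻ x, f x ^ b ∂μ) ^ (1 / b)) ^ θ * ((∫⁻ x, g x ^ a ∂μ) ^ (1 / a)) ^ (1 - θ) := by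
  have hwf : 0 ≤ θ * r / b := by positivity
  have hwg : 0 ≤ (1 - θ) * r / a := div_nonneg (mul_nonneg (by linarith) hr.le) ha.le
  have hsplit : ∀ x, (f x ^ θ * g x ^ (1 - θ)) ^ r =
      (f x ^ b) ^ (θ * r / b) * (g x ^ a) ^ ((1 - θ) * r / a) := fun x => by
    rw [ENNReal.mul_rpow_of_nonneg _ _ hr.le, ← ENNReal.rpow_mul, ← ENNReal.rpow_mul,
      ← ENNReal.rpow_mul, ← ENNReal.rpow_mul]
    congr 2 <;> field_simp
  have hholder := ENNReal.lintegral_mul_norm_pow_le (hf.pow_const b) (hg.pow_const a) hwf hwg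
    (by rw [mul_div_right_comm, mul_div_right_comm (1 - θ), ← add_mul, habr,
      one_div_mul_cancel hr.ne'])
  simp_rw [hsplit]
  calc (∫⁻ x, (f x ^ b) ^ (θ * r / b) * (g x ^ a) ^ ((1 - θ) * r / a) ∂μ) ^ (1 / r)
      ≤ ((∫⁻ x, f x ^ b ∂μ) ^ (θ * r / b) * (∫⁻ x, g x ^ a ∂μ) ^ ((1 - θ) * r / a)) ^ (1 / r) := by
        gcongr
    _ = _ := by
        rw [ENNReal.mul_rpow_of_nonneg _ _ (by positivity), ← ENNReal.rpow_mul,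
          ← ENNReal.rpow_mul, ← ENNReal.rpow_mul, ← ENNReal.rpow_mul]
        congr 2 <;> field_simp

end Holder

section Minkowski

variable {X Y : Type*} [MeasurableSpace X] [MeasurableSpace Y] {μ : Measure X} {ν : Measure Y}
  {h : X → Y → ℝ≥0∞} {p : ℝ}

theorem lintegral_rpow_le_of_le_lintegral [SFinite μ] [SFinite ν]
    (hh : Measurable (Function.uncurry h)) (hp : 1 < p) {g : X → ℝ≥0∞} (hg : Measurable g)
    (hgh : ∀ x, g x ≤ ∫⁻ y, h x y ∂ν) (hg_fin : ∫⁻ x, g x ^ p ∂μ ≠ ⊤) :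
    (∫⁻ x, g x ^ p ∂μ) ^ (1 / p) ≤ ∫⁻ y, (∫⁻ x, h x y ^ p ∂μ) ^ (1 / p) ∂ν := by
  have hpq := Real.HolderConjugate.conjExponent hp
  refine ENNReal.rpow_one_div_le_of_le_mul_rpow hpq hg_fin ?_
  calc ∫⁻ x, g x ^ p ∂μ = ∫⁻ x, g x ^ (p - 1) * g x ∂μ := by
        refine lintegral_congr fun x => ?_
        have := ENNReal.rpow_add_of_nonneg (x := g x) (p - 1) 1 (by linarith) zero_le_one
        rwa [sub_add_cancel, ENNReal.rpow_one] at this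
    _ ≤ ∫⁻ x, g x ^ (p - 1) * ∫⁻ y, h x y ∂ν ∂μ := by gcongr with x; exact hgh x
    _ = ∫⁻ x, ∫⁻ y, g x ^ (p - 1) * h x y ∂ν ∂μ :=
        lintegral_congr fun x => (lintegral_const_mul _ hh.of_uncurry_left).symm
    _ = ∫⁻ y, ∫⁻ x, h x y * g x ^ (p - 1) ∂μ ∂ν := by
        simp_rw [mul_comm (g _ ^ (p - 1))]
        exact lintegral_lintegral_swap (hh.mul ((hg.pow_const _).comp measurable_fst)).aemeasurable
    _ ≤ ∫⁻ y, (∫⁻ x, h x y ^ p ∂μ) ^ (1 / p) * (∫⁻ x, g x ^ p ∂μ) ^ (1 / p.conjExponent) ∂ν := by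
        gcongr with y
        exact ENNReal.lintegral_mul_rpow_le_lintegral_rpow_mul_lintegral_rpow hpq
          hh.of_uncurry_right.aemeasurable hg.aemeasurable
    _ = _ := lintegral_mul_const' _ _
        (ENNReal.rpow_ne_top_of_nonneg (one_div_nonneg.2 hpq.symm.nonneg) hg_fin)

/-- **Minkowski's integral inequality**. -/
theorem lintegral_lintegral_rpow_le [SigmaFinite μ] [SFinite ν]
    (hh : Measurable (Function.uncurry h)) (hp : 1 ≤ p) :
    (∫⁻ x, (∫⁻ y, h x y ∂ν) ^ p ∂μ) ^ (1 / p) ≤ ∫⁻ y, (∫⁻ x, h x y ^ p ∂μ) ^ (1 / p) ∂ν := by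
  rcases hp.eq_or_lt with rfl | hp
  · simpa using (lintegral_lintegral_swap hh.aemeasurable).le
  have hp0 : 0 < p := zero_lt_one.trans hp
  set S := fun x => ∫⁻ y, h x y ∂ν
  have hS : Measurable S := hh.lintegral_prod_right'
  set R := ∫⁻ y, (∫⁻ x, h x y ^ p ∂μ) ^ (1 / p) ∂ν
  rw [one_div, ENNReal.rpow_inv_le_iff hp0]
  refine lintegral_le_of_forall_fin_meas_le _ fun s _ hμs => ?_
  -- Truncating `S` at height `n` on a set of finite measure makes `∫ S ^ p` finite.
  have htrunc : ∀ n : ℕ, ∫⁻ x in s, min (S x) n ^ p ∂μ ≤ R ^ p := by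
    intro n
    have hfin : ∫⁻ x in s, min (S x) n ^ p ∂μ ≠ ⊤ := by
      refine ne_top_of_le_ne_top (b := ∫⁻ x in s, (n : ℝ≥0∞) ^ p ∂μ) ?_ ?_
      · rw [setLIntegral_const]
        exact ENNReal.mul_ne_top (by simp [hp0.le]) hμs
      · exact lintegral_mono fun x => ENNReal.rpow_le_rpow (min_le_right _ _) hp0.le
    rw [← ENNReal.rpow_inv_le_iff hp0, ← one_div]
    calc (∫⁻ x in s, min (S x) n ^ p ∂μ) ^ (1 / p)
        ≤ ∫⁻ y, (∫⁻ x in s, h x y ^ p ∂μ) ^ (1 / p) ∂ν :=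
          lintegral_rpow_le_of_le_lintegral hh hp (hS.min measurable_const)
            (fun x => min_le_left _ _) hfin
      _ ≤ R := lintegral_mono fun y =>
          ENNReal.rpow_le_rpow (lintegral_mono' Measure.restrict_le_self le_rfl) (by positivity)
  calc ∫⁻ x in s, S x ^ p ∂μ = ⨆ n : ℕ, ∫⁻ x in s, min (S x) n ^ p ∂μ := by
        refine (lintegral_congr fun x => (ENNReal.iSup_min_natCast_rpow hp0 (S x)).symm).trans ?_
        refine lintegral_iSup (fun n => (hS.min measurable_const).pow_const p) ?_
        intro m n hmn x
        dsimp only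
        gcongr
    _ ≤ R ^ p := iSup_le htrunc

end Minkowski

section Schur

variable {X Y : Type*} [MeasurableSpace X] [MeasurableSpace Y] {μ : Measure X} {ν : Measure Y}
  {K : X → Y → ℝ≥0∞} {F : Y → ℝ≥0∞}

theorem lintegral_lintegral_mul_rpow_le_mixedNorm [SFinite ν] {α β : ℝ} (hα : 1 ≤ α)
    (hβ : 0 < β) (γ : ℝ) (hK : Measurable (Function.uncurry K)) (hF : Measurable F) :
    (∫⁻ x, (∫⁻ y, K x y * F y ^ (γ * (1 - 1 / α)) ∂ν) ^ β ∂μ) ^ (1 / β) ≤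
      (∫⁻ x, (∫⁻ y, K x y ^ α ∂ν) ^ (β / α) ∂μ) ^ (1 / β) *
        (∫⁻ y, F y ^ γ ∂ν) ^ (1 - 1 / α) := by
  set Φ := ∫⁻ y, F y ^ γ ∂ν
  have hJ : Measurable fun x => ∫⁻ y, K x y ^ α ∂ν := (hK.pow_const α).lintegral_prod_right'
  calc (∫⁻ x, (∫⁻ y, K x y * F y ^ (γ * (1 - 1 / α)) ∂ν) ^ β ∂μ) ^ (1 / β)
      ≤ (∫⁻ x, ((∫⁻ y, K x y ^ α ∂ν) ^ (1 / α) * Φ ^ (1 - 1 / α)) ^ β ∂μ) ^ (1 / β) := by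
        gcongr with x
        exact lintegral_mul_rpow_le_of_one_le hα γ hK.of_uncurry_left.aemeasurable
          hF.aemeasurable
    _ = (∫⁻ x, (∫⁻ y, K x y ^ α ∂ν) ^ (β / α) ∂μ) ^ (1 / β) * Φ ^ (1 - 1 / α) := by
        simp_rw [ENNReal.mul_rpow_of_nonneg _ _ hβ.le, ← ENNReal.rpow_mul, one_div_mul_eq_div]
        rw [lintegral_mul_const _ (hJ.pow_const _), ENNReal.mul_rpow_of_nonneg _ _ (by positivity),
          ← ENNReal.rpow_mul, mul_assoc, mul_one_div_cancel hβ.ne', mul_one]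

theorem lintegral_lintegral_mul_rpow_le_mixedNorm_swap [SigmaFinite μ] [SFinite ν] {α β : ℝ}
    (hα : 1 ≤ α) (hβ : 1 ≤ β) (γ : ℝ) (hK : Measurable (Function.uncurry K))
    (hF : Measurable F) :
    (∫⁻ x, (∫⁻ y, K x y * F y ^ (γ * (1 - 1 / β)) ∂ν) ^ α ∂μ) ^ (1 / α) ≤
      (∫⁻ y, (∫⁻ x, K x y ^ α ∂μ) ^ (β / α) ∂ν) ^ (1 / β) *
        (∫⁻ y, F y ^ γ ∂ν) ^ (1 - 1 / β) := by
  have hα0 : 0 < α := zero_lt_one.trans_le hα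
  set v := fun y => F y ^ (γ * (1 - 1 / β))
  have hL : Measurable fun y => ∫⁻ x, K x y ^ α ∂μ :=
    ((hK.comp measurable_swap).pow_const α).lintegral_prod_right'
  have hinner : ∀ y, (∫⁻ x, (K x y * v y) ^ α ∂μ) ^ (1 / α) =
      (∫⁻ x, K x y ^ α ∂μ) ^ (1 / α) * v y := fun y => by
    simp_rw [ENNReal.mul_rpow_of_nonneg _ _ hα0.le]
    rw [lintegral_mul_const _ (hK.of_uncurry_right.pow_const α),
      ENNReal.mul_rpow_of_nonneg _ _ (by positivity), ← ENNReal.rpow_mul,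
      mul_one_div_cancel hα0.ne', ENNReal.rpow_one]
  calc (∫⁻ x, (∫⁻ y, K x y * v y ∂ν) ^ α ∂μ) ^ (1 / α)
      ≤ ∫⁻ y, (∫⁻ x, (K x y * v y) ^ α ∂μ) ^ (1 / α) ∂ν :=
        lintegral_lintegral_rpow_le (hK.mul ((hF.pow_const _).comp measurable_snd)) hα
    _ = ∫⁻ y, (∫⁻ x, K x y ^ α ∂μ) ^ (1 / α) * v y ∂ν := lintegral_congr hinner
    _ ≤ _ := by
        refine (lintegral_mul_rpow_le_of_one_le hβ γ (hL.pow_const _).aemeasurable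
          hF.aemeasurable).trans_eq ?_
        simp_rw [← ENNReal.rpow_mul, one_div_mul_eq_div]

theorem lintegral_lintegral_mul_rpow_le_of_interpolation [SigmaFinite μ] [SFinite ν]
    {α β γ ρ θ : ℝ} (hα : 1 ≤ α) (hγ : 0 < γ) (hαβ : α ≤ β) (hρ : 0 < ρ)
    (hθ₀ : 0 ≤ θ) (hθ₁ : θ ≤ 1) (hθρ : θ / β + (1 - θ) / α = 1 / ρ)
    (hθγ : 1 / γ = (1 - 1 / α) * θ + (1 - 1 / β) * (1 - θ))
    (hK : Measurable (Function.uncurry K)) (hF : Measurable F) :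
    (∫⁻ x, (∫⁻ y, K x y * F y ∂ν) ^ ρ ∂μ) ^ (1 / ρ) ≤
      max ((∫⁻ x, (∫⁻ y, K x y ^ α ∂ν) ^ (β / α) ∂μ) ^ (1 / β))
          ((∫⁻ y, (∫⁻ x, K x y ^ α ∂μ) ^ (β / α) ∂ν) ^ (1 / β)) *
        (∫⁻ y, F y ^ γ ∂ν) ^ (1 / γ) := by
  have hα0 : 0 < α := zero_lt_one.trans_le hα
  have hβ : 1 ≤ β := hα.trans hαβ
  have hα' : 0 ≤ 1 - 1 / α := by rw [sub_nonneg, div_le_one hα0]; exact hα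
  have hβ' : 0 ≤ 1 - 1 / β := by rw [sub_nonneg, div_le_one (by linarith)]; exact hβ
  have hsum : γ * (1 - 1 / α) * θ + γ * (1 - 1 / β) * (1 - θ) = 1 := by
    rw [mul_assoc, mul_assoc, ← mul_add, ← hθγ, mul_one_div_cancel hγ.ne']
  set s := γ * (1 - 1 / α)
  set σ := γ * (1 - 1 / β)
  have hFsplit : ∀ y, F y = (F y ^ s) ^ θ * (F y ^ σ) ^ (1 - θ) := fun y => by
    rw [← ENNReal.rpow_mul, ← ENNReal.rpow_mul, ← ENNReal.rpow_add_of_nonneg _ _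
      (mul_nonneg (mul_nonneg hγ.le hα') hθ₀) (mul_nonneg (mul_nonneg hγ.le hβ') (by linarith)),
      hsum, ENNReal.rpow_one]
  set Tu := fun x => ∫⁻ y, K x y * F y ^ s ∂ν
  set Tv := fun x => ∫⁻ y, K x y * F y ^ σ ∂ν
  have hTu : Measurable Tu := (hK.mul ((hF.pow_const s).comp measurable_snd)).lintegral_prod_right'
  have hTv : Measurable Tv := (hK.mul ((hF.pow_const σ).comp measurable_snd)).lintegral_prod_right'
  calc (∫⁻ x, (∫⁻ y, K x y * F y ∂ν) ^ ρ ∂μ) ^ (1 / ρ)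
      ≤ (∫⁻ x, (Tu x ^ θ * Tv x ^ (1 - θ)) ^ ρ ∂μ) ^ (1 / ρ) := by
        gcongr with x
        conv_lhs => enter [2, y]; rw [hFsplit y]
        exact lintegral_mul_rpow_mul_rpow_le hθ₀ hθ₁ hK.of_uncurry_left.aemeasurable
          (hF.pow_const s).aemeasurable (hF.pow_const σ).aemeasurable
    _ ≤ ((∫⁻ x, Tu x ^ β ∂μ) ^ (1 / β)) ^ θ * ((∫⁻ x, Tv x ^ α ∂μ) ^ (1 / α)) ^ (1 - θ) :=
        lintegral_rpow_mul_rpow_rpow_le hθ₀ hθ₁ hα0 (by linarith) hρ hθρ hTu.aemeasurable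
          hTv.aemeasurable
    _ ≤ _ := by
        rw [hθγ]
        refine le_trans ?_ (ENNReal.mul_rpow_mul_mul_rpow_le_max _ _ _ hθ₀ hθ₁ hα' hβ')
        gcongr
        · exact lintegral_lintegral_mul_rpow_le_mixedNorm hα (by linarith) γ hK hF
        · exact lintegral_lintegral_mul_rpow_le_mixedNorm_swap hα hβ γ hK hF

theorem lintegral_lintegral_mul_rpow_le_max_mixedNorm [SigmaFinite μ] [SFinite ν]
    {α β γ ρ : ℝ} (hα : 1 ≤ α) (hγ : 0 < γ) (h₁ : α ≤ ρ) (h₂ : ρ ≤ β)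
    (hexp : 1 / α + 1 / β + 1 / γ = 1 + 1 / ρ)
    (hK : Measurable (Function.uncurry K)) (hF : Measurable F) :
    (∫⁻ x, (∫⁻ y, K x y * F y ∂ν) ^ ρ ∂μ) ^ (1 / ρ) ≤
      max ((∫⁻ x, (∫⁻ y, K x y ^ α ∂ν) ^ (β / α) ∂μ) ^ (1 / β))
          ((∫⁻ y, (∫⁻ x, K x y ^ α ∂μ) ^ (β / α) ∂ν) ^ (1 / β)) *
        (∫⁻ y, F y ^ γ ∂ν) ^ (1 / γ) := by
  have hα0 : 0 < α := zero_lt_one.trans_le hα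
  obtain ⟨θ, hθ₀, hθ₁, hθρ⟩ := exists_div_add_one_sub_div_eq_one_div hα0 h₁ h₂
  have hθγ : 1 / γ = (1 - 1 / α) * θ + (1 - 1 / β) * (1 - θ) := by
    rw [← hθρ] at hexp
    linear_combination hexp
  exact lintegral_lintegral_mul_rpow_le_of_interpolation hα hγ (h₁.trans h₂)
    (hα0.trans_le h₁) hθ₀ hθ₁ hθρ hθγ hK hF

end Schur

theorem schur_type_integral_operator_bound_general (N : ℕ)
    (α₁ β₁ γ₁ ρ₁ : ℝ)
    (hα₁ : 1 ≤ α₁) (hγ₁ : 1 ≤ γ₁)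
    (h₁ : α₁ ≤ ρ₁) (h₂ : ρ₁ ≤ β₁)
    (hexp : 1 / α₁ + 1 / β₁ + 1 / γ₁ = 1 + 1 / ρ₁)
    (k : EuclideanSpace ℝ (Fin N) → EuclideanSpace ℝ (Fin N) → ℝ)
    (hk : Measurable fun q : EuclideanSpace ℝ (Fin N) × EuclideanSpace ℝ (Fin N) => k q.1 q.2)
    (f : EuclideanSpace ℝ (Fin N) → ℝ) (hf : Measurable f) :
    (∫⁻ x, (∫⁻ y, ENNReal.ofReal (|k x y| * |f y|)) ^ ρ₁) ^ (1 / ρ₁) ≤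
      max ((∫⁻ x, (∫⁻ y, ENNReal.ofReal |k x y| ^ α₁) ^ (β₁ / α₁)) ^ (1 / β₁))
          ((∫⁻ y, (∫⁻ x, ENNReal.ofReal |k x y| ^ α₁) ^ (β₁ / α₁)) ^ (1 / β₁)) *
        (∫⁻ x, ENNReal.ofReal |f x| ^ γ₁) ^ (1 / γ₁) := by
  simp_rw [ENNReal.ofReal_mul (abs_nonneg _)]
  exact lintegral_lintegral_mul_rpow_le_max_mixedNorm hα₁ (by linarith) h₁ h₂ hexp
    hk.abs.ennreal_ofReal hf.abs.ennreal_ofReal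

/-- Schur-type bound for integral operators with mixed-norm kernel hypotheses:
if `k ∈ L_x^{β₁}L_y^{α₁} ∩ L_y^{β₁}L_x^{α₁}` and `α₁ ≤ ρ₁ ≤ β₁`,
`1/α₁ + 1/β₁ + 1/γ₁ = 1 + 1/ρ₁`, then `K : L^{γ₁} → L^{ρ₁}` with norm at most
`max(‖k‖_{L_x^{β₁}L_y^{α₁}}, ‖k‖_{L_y^{β₁}L_x^{α₁}})`. -/
theorem schur_type_integral_operator_bound (N : ℕ) (hN : 1 ≤ N)
    (α₁ β₁ γ₁ ρ₁ : ℝ)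
    (hα₁ : 1 ≤ α₁) (hβ₁ : 1 ≤ β₁) (hγ₁ : 1 ≤ γ₁) (hρ₁ : 1 ≤ ρ₁)
    (h₁ : α₁ ≤ ρ₁) (h₂ : ρ₁ ≤ β₁)
    (hexp : 1 / α₁ + 1 / β₁ + 1 / γ₁ = 1 + 1 / ρ₁)
    (k : EuclideanSpace ℝ (Fin N) → EuclideanSpace ℝ (Fin N) → ℝ)
    (hk : Measurable fun q : EuclideanSpace ℝ (Fin N) × EuclideanSpace ℝ (Fin N) => k q.1 q.2)
    (hA : (∫⁻ x, (∫⁻ y, ENNReal.ofReal |k x y| ^ α₁) ^ (β₁ / α₁)) ^ (1 / β₁) < ⊤)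
    (hB : (∫⁻ y, (∫⁻ x, ENNReal.ofReal |k x y| ^ α₁) ^ (β₁ / α₁)) ^ (1 / β₁) < ⊤)
    (f : EuclideanSpace ℝ (Fin N) → ℝ) (hf : Measurable f)
    (hfL : (∫⁻ x, ENNReal.ofReal |f x| ^ γ₁) < ⊤) :
    (∫⁻ x, (∫⁻ y, ENNReal.ofReal (|k x y| * |f y|)) ^ ρ₁) ^ (1 / ρ₁) ≤
      max ((∫⁻ x, (∫⁻ y, ENNReal.ofReal |k x y| ^ α₁) ^ (β₁ / α₁)) ^ (1 / β₁))
          ((∫⁻ y, (∫⁻ x, ENNReal.ofReal |k x y| ^ α₁) ^ (β₁ / α₁)) ^ (1 / β₁)) *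
        (∫⁻ x, ENNReal.ofReal |f x| ^ γ₁) ^ (1 / γ₁) :=
  schur_type_integral_operator_bound_general N α₁ β₁ γ₁ ρ₁ hα₁ hγ₁ h₁ h₂ hexp k hk f hf
end

section
/- Let p > 2 be a real number and set r := min(2, p/2), so r ∈ (1, p). Then there exists a constant C > 0 depending only on p such that for all complex numbers u and v, | |u+v|^p − |u|^p − p |u|^{p−2} Re(u · conj(v)) | ≤ C ( |u|^{p−r} |v|^{r} + |v|^p ), with the convention that |u|^{p−2} Re(u · conj(v)) = 0 when u = 0. -/
open Real Complex

/-!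
Split according to whether `2‖v‖ ≤ ‖u‖`. If so, the segment from `u` to `u + v` stays at distance
at least `‖u‖ / 2` from the origin, where `‖·‖ ^ p` is smooth with second derivative of size
`‖u‖ ^ (p - 2)`, so a second-order mean value estimate bounds the error by `‖u‖ ^ (p - 2) ‖v‖ ^ 2`,
which is at most `‖u‖ ^ (p - r) ‖v‖ ^ r` since `‖v‖ ≤ ‖u‖` and `r ≤ 2`. Otherwise every term is
`O(‖v‖ ^ p)`. The estimate holds in any real inner product space, `ℂ` being the case
`⟪u, v⟫ = Re (u v̄)`.
-/

open Set in
theorem abs_sub_sub_deriv_le_of_abs_deriv2_le {f f' f'' : ℝ → ℝ} {M : ℝ}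
    (hf : ∀ t ∈ Icc (0 : ℝ) 1, HasDerivAt f (f' t) t)
    (hf' : ∀ t ∈ Icc (0 : ℝ) 1, HasDerivAt f' (f'' t) t)
    (hM : ∀ t ∈ Icc (0 : ℝ) 1, |f'' t| ≤ M) :
    |f 1 - f 0 - f' 0| ≤ M := by
  have h0 : (0 : ℝ) ∈ Icc (0 : ℝ) 1 := left_mem_Icc.2 zero_le_one
  have hM0 : 0 ≤ M := (abs_nonneg _).trans (hM 0 h0)
  have hf'_sub : ∀ t ∈ Icc (0 : ℝ) 1, ‖f' t - f' 0‖ ≤ M := fun t ht => by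
    have := (convex_Icc (0 : ℝ) 1).norm_image_sub_le_of_norm_hasDerivWithin_le
      (fun s hs => (hf' s hs).hasDerivWithinAt) hM h0 ht
    rw [sub_zero, Real.norm_of_nonneg ht.1] at this
    exact this.trans (mul_le_of_le_one_right hM0 ht.2)
  have hg : ∀ t ∈ Icc (0 : ℝ) 1, HasDerivAt (fun t => f t - t * f' 0) (f' t - f' 0) t :=
    fun t ht => (hf t ht).sub (by simpa using (hasDerivAt_id t).mul_const (f' 0))
  have := (convex_Icc (0 : ℝ) 1).norm_image_sub_le_of_norm_hasDerivWithin_le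
    (fun s hs => (hg s hs).hasDerivWithinAt) hf'_sub h0 (right_mem_Icc.2 zero_le_one)
  simp only [one_mul, zero_mul, sub_zero, norm_one, mul_one, Real.norm_eq_abs] at this
  rwa [sub_right_comm] at this

theorem rpow_sub_mul_rpow_le_rpow_sub_mul_rpow {a c p s t : ℝ} (hc : 0 ≤ c) (hca : c ≤ a)
    (hs : 0 < s) (hst : s ≤ t) : a ^ (p - t) * c ^ t ≤ a ^ (p - s) * c ^ s := by
  rcases hc.eq_or_lt with rfl | hc
  · simp [zero_rpow hs.ne', zero_rpow (hs.trans_le hst).ne']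
  have ha : 0 < a := hc.trans_le hca
  calc a ^ (p - t) * c ^ t = a ^ (p - t) * c ^ (t - s) * c ^ s := by
        rw [mul_assoc, ← rpow_add hc, sub_add_cancel]
    _ ≤ a ^ (p - t) * a ^ (t - s) * c ^ s := by gcongr
    _ = a ^ (p - s) * c ^ s := by rw [← rpow_add ha, sub_add_sub_cancel]

theorem hasDerivAt_add_smul {F : Type*} [NormedAddCommGroup F] [NormedSpace ℝ F] (u v : F)
    (t : ℝ) : HasDerivAt (fun t : ℝ => u + t • v) v t := by
  simpa using ((hasDerivAt_id t).smul_const v).const_add u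

section InnerProductSpace

variable {E : Type*} [NormedAddCommGroup E] [InnerProductSpace ℝ E]

theorem hasDerivAt_norm_add_smul_rpow {u v : E} {t : ℝ} (s : ℝ) (h : u + t • v ≠ 0) :
    HasDerivAt (fun t : ℝ => ‖u + t • v‖ ^ s)
      (s * ‖u + t • v‖ ^ (s - 2) * inner ℝ (u + t • v) v) t := by
  have := (hasDerivAt_add_smul u v t).norm_sq.rpow_const (p := s / 2) (.inl (by positivity))
  convert this using 1
  · ext t
    rw [← rpow_natCast_mul (norm_nonneg _)]
    congr 1; push_cast; ring
  · rw [← rpow_natCast_mul (norm_nonneg _)]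
    push_cast
    ring_nf

/-- The expression bounded here is the second derivative of `t ↦ ‖w + t • v‖ ^ p` at `t = 0`. -/
theorem abs_second_deriv_norm_rpow_le {p : ℝ} (hp : 2 ≤ p) {w : E} (hw : w ≠ 0) (v : E) :
    |p * ((p - 2) * ‖w‖ ^ (p - 4) * inner ℝ w v * inner ℝ w v + ‖w‖ ^ (p - 2) * ‖v‖ ^ 2)| ≤
      p * (p - 1) * ‖w‖ ^ (p - 2) * ‖v‖ ^ 2 := by
  have hN : 0 < ‖w‖ := norm_pos_iff.2 hw
  have hinner : inner ℝ w v * inner ℝ w v ≤ ‖w‖ ^ 2 * ‖v‖ ^ 2 := by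
    rw [← mul_pow, ← abs_mul_abs_self, ← sq]
    exact pow_le_pow_left₀ (abs_nonneg _) (abs_real_inner_le_norm w v) 2
  have hpow : ‖w‖ ^ (p - 4) * ‖w‖ ^ 2 = ‖w‖ ^ (p - 2) := by
    rw [← rpow_natCast, ← rpow_add hN]; norm_num; ring_nf
  have hcross : 0 ≤ (p - 2) * ‖w‖ ^ (p - 4) * inner ℝ w v * inner ℝ w v := by
    rw [mul_assoc]
    exact mul_nonneg (mul_nonneg (by linarith) (by positivity)) (mul_self_nonneg _)
  rw [abs_of_nonneg (by positivity)]
  calc p * ((p - 2) * ‖w‖ ^ (p - 4) * inner ℝ w v * inner ℝ w v + ‖w‖ ^ (p - 2) * ‖v‖ ^ 2)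
      ≤ p * ((p - 2) * ‖w‖ ^ (p - 4) * (‖w‖ ^ 2 * ‖v‖ ^ 2) + ‖w‖ ^ (p - 2) * ‖v‖ ^ 2) := by
        rw [mul_assoc _ (inner ℝ w v)]
        gcongr
    _ = p * (p - 1) * ‖w‖ ^ (p - 2) * ‖v‖ ^ 2 := by
        rw [← hpow]; ring

theorem abs_norm_add_rpow_sub_le_of_two_mul_norm_le {p : ℝ} (hp : 2 ≤ p) {u v : E}
    (hv : 2 * ‖v‖ ≤ ‖u‖) :
    |‖u + v‖ ^ p - ‖u‖ ^ p - p * ‖u‖ ^ (p - 2) * inner ℝ u v| ≤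
      p * (p - 1) * (3 / 2) ^ (p - 2) * ‖u‖ ^ (p - 2) * ‖v‖ ^ 2 := by
  rcases eq_or_ne u 0 with rfl | hu
  · obtain rfl : v = 0 := norm_le_zero_iff.1 (by rw [norm_zero] at hv; linarith)
    simp [zero_rpow (by linarith : p ≠ 0)]
  have hnorm : ∀ t ∈ Set.Icc (0 : ℝ) 1, ‖u‖ / 2 ≤ ‖u + t • v‖ ∧ ‖u + t • v‖ ≤ 3 / 2 * ‖u‖ := by
    intro t ht
    have htv : ‖t • v‖ ≤ ‖v‖ := by
      rw [norm_smul, Real.norm_of_nonneg ht.1]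
      exact mul_le_of_le_one_left (norm_nonneg v) ht.2
    have := norm_sub_le (u + t • v) (t • v)
    rw [add_sub_cancel_right] at this
    constructor <;> linarith [norm_add_le u (t • v)]
  have hne : ∀ t ∈ Set.Icc (0 : ℝ) 1, u + t • v ≠ 0 := fun t ht =>
    norm_pos_iff.1 ((half_pos (norm_pos_iff.2 hu)).trans_le (hnorm t ht).1)
  have hinner (t : ℝ) : HasDerivAt (fun t : ℝ => inner ℝ (u + t • v) v) (‖v‖ ^ 2) t := by
    simpa [real_inner_self_eq_norm_sq] using
      (hasDerivAt_add_smul u v t).inner ℝ (hasDerivAt_const t v)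
  have key := abs_sub_sub_deriv_le_of_abs_deriv2_le
    (f := fun t => ‖u + t • v‖ ^ p)
    (f' := fun t => p * ‖u + t • v‖ ^ (p - 2) * inner ℝ (u + t • v) v)
    (f'' := fun t => p * ((p - 2) * ‖u + t • v‖ ^ (p - 4) * inner ℝ (u + t • v) v *
      inner ℝ (u + t • v) v + ‖u + t • v‖ ^ (p - 2) * ‖v‖ ^ 2))
    (fun t ht => hasDerivAt_norm_add_smul_rpow p (hne t ht))
    (M := p * (p - 1) * (3 / 2) ^ (p - 2) * ‖u‖ ^ (p - 2) * ‖v‖ ^ 2)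
    (fun t ht => by
      refine (((hasDerivAt_norm_add_smul_rpow (p - 2) (hne t ht)).const_mul p).mul
        (hinner t)).congr_deriv ?_
      rw [show p - 2 - 2 = p - 4 by ring]
      ring)
    (fun t ht => by
      refine (abs_second_deriv_norm_rpow_le hp (hne t ht) v).trans ?_
      rw [mul_assoc _ ((3 / 2 : ℝ) ^ (p - 2)), ← mul_rpow (by norm_num) (norm_nonneg u)]
      gcongr
      · exact mul_nonneg (by linarith) (by linarith)
      · exact (hnorm t ht).2)
  simpa using key

theorem abs_norm_add_rpow_sub_le_of_norm_le_two_mul {p : ℝ} (hp : 1 < p) {u v : E}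
    (hu : ‖u‖ ≤ 2 * ‖v‖) :
    |‖u + v‖ ^ p - ‖u‖ ^ p - p * ‖u‖ ^ (p - 2) * inner ℝ u v| ≤
      (3 ^ p + 2 ^ p + p * 2 ^ (p - 1)) * ‖v‖ ^ p := by
  have hsum : ‖u + v‖ ^ p ≤ 3 ^ p * ‖v‖ ^ p := by
    rw [← mul_rpow (by norm_num) (norm_nonneg v)]
    gcongr
    linarith [norm_add_le u v]
  have hfirst : ‖u‖ ^ p ≤ 2 ^ p * ‖v‖ ^ p := by
    rw [← mul_rpow (by norm_num) (norm_nonneg v)]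
    gcongr
  have hlinear : |p * ‖u‖ ^ (p - 2) * inner ℝ u v| ≤ p * 2 ^ (p - 1) * ‖v‖ ^ p :=
    calc |p * ‖u‖ ^ (p - 2) * inner ℝ u v|
        ≤ p * ‖u‖ ^ (p - 2) * (‖u‖ * ‖v‖) := by
          rw [abs_mul, abs_of_nonneg (by positivity)]
          gcongr
          exact abs_real_inner_le_norm u v
      _ = p * ‖u‖ ^ (p - 1) * ‖v‖ := by
          rw [show p - 1 = p - 2 + 1 by ring, rpow_add_one' (norm_nonneg u) (by linarith)]
          ring
      _ ≤ p * (2 * ‖v‖) ^ (p - 1) * ‖v‖ := by gcongr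
      _ = p * 2 ^ (p - 1) * ‖v‖ ^ p := by
          rw [mul_rpow (by norm_num) (norm_nonneg v), ← sub_add_cancel p 1,
            rpow_add_one' (norm_nonneg v) (by linarith), add_sub_cancel_right]
          ring
  have := abs_le.1 hlinear
  rw [abs_le]
  constructor <;> linarith [rpow_nonneg (norm_nonneg (u + v)) p, rpow_nonneg (norm_nonneg u) p]

theorem exists_abs_norm_add_rpow_sub_le {p r : ℝ} (hp : 2 ≤ p) (hr : 0 < r) (hr2 : r ≤ 2) :
    ∃ C > 0, ∀ u v : E,
      |‖u + v‖ ^ p - ‖u‖ ^ p - p * ‖u‖ ^ (p - 2) * inner ℝ u v| ≤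
        C * (‖u‖ ^ (p - r) * ‖v‖ ^ r + ‖v‖ ^ p) := by
  have hK₁ : 0 ≤ p * (p - 1) * (3 / 2 : ℝ) ^ (p - 2) :=
    mul_nonneg (mul_nonneg (by linarith) (by linarith)) (by positivity)
  have hK₂ : 0 < (3 : ℝ) ^ p + 2 ^ p + p * 2 ^ (p - 1) := by
    have : 0 < p := by linarith
    positivity
  set K₁ := p * (p - 1) * (3 / 2 : ℝ) ^ (p - 2)
  set K₂ := (3 : ℝ) ^ p + 2 ^ p + p * 2 ^ (p - 1)
  refine ⟨K₁ + K₂, by positivity, fun u v => ?_⟩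
  rcases le_total (2 * ‖v‖) ‖u‖ with hv | hu
  · have hcompare : ‖u‖ ^ (p - 2) * ‖v‖ ^ 2 ≤ ‖u‖ ^ (p - r) * ‖v‖ ^ r := by
      simpa using rpow_sub_mul_rpow_le_rpow_sub_mul_rpow (p := p) (norm_nonneg v)
        (by linarith [norm_nonneg v] : ‖v‖ ≤ ‖u‖) hr hr2
    calc _ ≤ K₁ * (‖u‖ ^ (p - 2) * ‖v‖ ^ 2) := by
          rw [← mul_assoc]; exact abs_norm_add_rpow_sub_le_of_two_mul_norm_le hp hv
      _ ≤ (K₁ + K₂) * (‖u‖ ^ (p - r) * ‖v‖ ^ r + ‖v‖ ^ p) := by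
          gcongr <;> linarith [rpow_nonneg (norm_nonneg v) p]
  · calc _ ≤ K₂ * ‖v‖ ^ p := abs_norm_add_rpow_sub_le_of_norm_le_two_mul (by linarith) hu
      _ ≤ (K₁ + K₂) * (‖u‖ ^ (p - r) * ‖v‖ ^ r + ‖v‖ ^ p) := by
          gcongr <;> linarith [show 0 ≤ ‖u‖ ^ (p - r) * ‖v‖ ^ r by positivity]

end InnerProductSpace

/-- Second-order Taylor-type pointwise expansion of `z ↦ |z|^p` on `ℂ`, `p > 2`,
with error `C(|u|^{p−r}|v|^r + |v|^p)` where `r = min(2, p/2)`. -/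
theorem abs_pow_taylor_expansion (p : ℝ) (hp : 2 < p) :
    ∃ C > 0, ∀ u v : ℂ,
      |‖u + v‖ ^ p - ‖u‖ ^ p - p * ‖u‖ ^ (p - 2) * (u * (starRingEnd ℂ) v).re| ≤
        C * (‖u‖ ^ (p - min 2 (p / 2)) * ‖v‖ ^ (min 2 (p / 2)) + ‖v‖ ^ p) := by
  obtain ⟨C, hC, hbound⟩ := exists_abs_norm_add_rpow_sub_le (E := ℂ) hp.le
    (lt_min two_pos (by linarith)) (min_le_left 2 (p / 2))
  refine ⟨C, hC, fun u v => ?_⟩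
  rw [← Complex.inner, real_inner_comm]
  exact hbound u v
end

section
/- Let N ≥ 3, let u : ℝ^N → ℂ be smooth with compact support and let θ, w : ℝ^N → ℝ be smooth. Then Re ∫_{ℝ^N} Δu(x) · 2θ(x) (∇ū(x) · ∇w(x)) dx = −Re ∫_{ℝ^N} [ 2 (∇u · ∇θ)(∇ū · ∇w) + 2θ Σ_{i,j=1}^{N} ∂_j u ∂_i ū ∂_{ij} w − |∇u|² (∇θ · ∇w) − |∇u|² θ Δw ] dx. -/
open MeasureTheory Real Complex
open scoped BigOperators

/-- The `i`-th partial derivative `∂ᵢ f(x)`. -/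
noncomputable def pd {N : ℕ} {F : Type*} [NormedAddCommGroup F] [NormedSpace ℝ F]
    (f : EuclideanSpace ℝ (Fin N) → F) (i : Fin N) (x : EuclideanSpace ℝ (Fin N)) : F :=
  fderiv ℝ f x (EuclideanSpace.single i 1)

section VirialAux


variable {N : ℕ} {x : EuclideanSpace ℝ (Fin N)} {i j : Fin N}
  {F : Type*} [NormedAddCommGroup F] [NormedSpace ℝ F]

lemma le1T : ((⊤:ℕ∞) : WithTop ℕ∞) ≠ 0 := by simp

lemma cd_pd {f : EuclideanSpace ℝ (Fin N) → F} (hf : ContDiff ℝ (⊤:ℕ∞) f) (i : Fin N) :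
    ContDiff ℝ (⊤:ℕ∞) (pd f i) := by
  have h := hf.fderiv_right (m := (⊤:ℕ∞)) (le_of_eq (by norm_cast))
  exact h.clm_apply contDiff_const

lemma cd_ofReal {f : EuclideanSpace ℝ (Fin N) → ℝ} (hf : ContDiff ℝ (⊤:ℕ∞) f) :
    ContDiff ℝ (⊤:ℕ∞) (fun y => ((f y : ℝ) : ℂ)) :=
  Complex.ofRealCLM.contDiff.comp hf

lemma cd_conj {f : EuclideanSpace ℝ (Fin N) → ℂ} (hf : ContDiff ℝ (⊤:ℕ∞) f) :
    ContDiff ℝ (⊤:ℕ∞) (fun y => (starRingEnd ℂ) (f y)) :=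
  Complex.conjCLE.toContinuousLinearMap.contDiff.comp hf

lemma hasCompactSupport_pd {f : EuclideanSpace ℝ (Fin N) → F} (hf : HasCompactSupport f)
    (i : Fin N) : HasCompactSupport (pd f i) :=
  (hf.fderiv (𝕜 := ℝ)).comp_left
    (g := fun L : (EuclideanSpace ℝ (Fin N)) →L[ℝ] F => L (EuclideanSpace.single i 1)) rfl

lemma pd_mul {f g : EuclideanSpace ℝ (Fin N) → ℂ} (hf : DifferentiableAt ℝ f x)
    (hg : DifferentiableAt ℝ g x) :
    pd (fun y => f y * g y) i x = pd f i x * g x + f x * pd g i x := by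
  unfold pd
  rw [fderiv_fun_mul hf hg]
  simp [smul_eq_mul]
  ring

lemma pd_sum {ι : Type*} (s : Finset ι) {f : ι → EuclideanSpace ℝ (Fin N) → ℂ}
    (hf : ∀ j ∈ s, DifferentiableAt ℝ (f j) x) :
    pd (fun y => ∑ j ∈ s, f j y) i x = ∑ j ∈ s, pd (f j) i x := by
  unfold pd
  rw [fderiv_fun_sum hf]
  simp

lemma pd_sub {f g : EuclideanSpace ℝ (Fin N) → ℂ} (hf : DifferentiableAt ℝ f x)
    (hg : DifferentiableAt ℝ g x) :
    pd (fun y => f y - g y) i x = pd f i x - pd g i x := by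
  unfold pd; rw [fderiv_fun_sub hf hg]; simp

lemma pd_ofReal {f : EuclideanSpace ℝ (Fin N) → ℝ} (hf : DifferentiableAt ℝ f x) :
    pd (fun y => ((f y : ℝ) : ℂ)) i x = ((pd f i x : ℝ) : ℂ) := by
  have h : HasFDerivAt (fun y => ((f y : ℝ) : ℂ))
      (Complex.ofRealCLM.comp (fderiv ℝ f x)) x :=
    Complex.ofRealCLM.hasFDerivAt.comp x hf.hasFDerivAt
  simp [pd, h.fderiv]

lemma pd_conj {f : EuclideanSpace ℝ (Fin N) → ℂ} (hf : DifferentiableAt ℝ f x) :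
    pd (fun y => (starRingEnd ℂ) (f y)) i x = (starRingEnd ℂ) (pd f i x) := by
  have h : HasFDerivAt (fun y => (starRingEnd ℂ) (f y))
      ((Complex.conjCLE : ℂ ≃L[ℝ] ℂ).toContinuousLinearMap.comp (fderiv ℝ f x)) x :=
    (Complex.conjCLE.toContinuousLinearMap.hasFDerivAt).comp x hf.hasFDerivAt
  simp [pd, h.fderiv]

lemma pd_re {f : EuclideanSpace ℝ (Fin N) → ℂ} (hf : DifferentiableAt ℝ f x) :
    pd (fun y => (f y).re) i x = (pd f i x).re := by
  have h : HasFDerivAt (fun y => (f y).re)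
      (Complex.reCLM.comp (fderiv ℝ f x)) x :=
    Complex.reCLM.hasFDerivAt.comp x hf.hasFDerivAt
  simp [pd, h.fderiv]

lemma pd_pd_eq {f : EuclideanSpace ℝ (Fin N) → F} (hf : ContDiff ℝ (⊤:ℕ∞) f) :
    pd (fun y => pd f i y) j x
      = fderiv ℝ (fderiv ℝ f) x (EuclideanSpace.single j 1) (EuclideanSpace.single i 1) := by
  have hdf : DifferentiableAt ℝ (fderiv ℝ f) x := by
    have h := hf.fderiv_right (m := (⊤:ℕ∞)) (le_of_eq (by norm_cast))
    exact (h.differentiable le1T) x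
  set A := ContinuousLinearMap.apply ℝ F (EuclideanSpace.single i 1 : EuclideanSpace ℝ (Fin N))
    with hA
  have h0 := A.hasFDerivAt.comp x hdf.hasFDerivAt
  have h1 : pd (fun y => pd f i y) j x
      = (A.comp (fderiv ℝ (fderiv ℝ f) x)) (EuclideanSpace.single j 1) := by
    unfold pd
    rw [show (fun y => (fderiv ℝ f y) (EuclideanSpace.single i 1 : EuclideanSpace ℝ (Fin N)))
      = ⇑A ∘ fderiv ℝ f from rfl, h0.fderiv]
  simpa [hA] using h1

lemma pd_pd_symm {f : EuclideanSpace ℝ (Fin N) → F} (hf : ContDiff ℝ (⊤:ℕ∞) f) :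
    pd (fun y => pd f i y) j x = pd (fun y => pd f j y) i x := by
  rw [pd_pd_eq hf, pd_pd_eq hf]
  exact (hf.contDiffAt.isSymmSndFDerivAt ((WithTop.coe_le_coe.mpr (le_top : (2:ℕ∞) ≤ ⊤)).trans_eq' (by simp [minSmoothness_of_isRCLikeNormedField]))).eq _ _

lemma integral_pd_eq_zero {f : EuclideanSpace ℝ (Fin N) → ℝ} (hf : ContDiff ℝ (⊤:ℕ∞) f)
    (hs : HasCompactSupport f) : ∫ x, pd f i x = 0 := by
  have hint1 : Integrable (fun x : EuclideanSpace ℝ (Fin N) =>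
      fderiv ℝ f x (EuclideanSpace.single i 1) * (1:ℝ)) volume := by
    apply Continuous.integrable_of_hasCompactSupport
    · exact ((cd_pd hf i).continuous).mul continuous_const
    · exact (hasCompactSupport_pd hs i).mul_right
  have hint2 : Integrable (fun x : EuclideanSpace ℝ (Fin N) =>
      f x * fderiv ℝ (fun _ => (1:ℝ)) x (EuclideanSpace.single i 1)) volume := by
    have : (fun x : EuclideanSpace ℝ (Fin N) =>
        f x * fderiv ℝ (fun _ => (1:ℝ)) x (EuclideanSpace.single i 1)) = fun _ => 0 := by
      ext y; simp
    rw [this]; exact integrable_zero _ _ _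
  have hint3 : Integrable (fun x : EuclideanSpace ℝ (Fin N) => f x * (1:ℝ)) volume := by
    apply Continuous.integrable_of_hasCompactSupport
    · exact hf.continuous.mul continuous_const
    · exact hs.mul_right
  have h := integral_mul_fderiv_eq_neg_fderiv_mul_of_integrable
    (μ := (volume : Measure (EuclideanSpace ℝ (Fin N))))
    (f := f) (g := fun _ => (1:ℝ)) (v := EuclideanSpace.single i 1)
    hint1 hint2 hint3 (fun y _ => hf.differentiable le1T y) (fun y _ => differentiable_const (1:ℝ) y)
  simp only [fderiv_const_apply, ContinuousLinearMap.zero_apply, mul_zero, mul_one,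
    integral_zero] at h
  have h2 : ∫ x, pd f i x = ∫ x, fderiv ℝ f x (EuclideanSpace.single i 1) := rfl
  rw [h2]
  linarith

lemma pd_const_mul {f : EuclideanSpace ℝ (Fin N) → ℂ} (hf : DifferentiableAt ℝ f x) (c : ℂ) :
    pd (fun y => c * f y) i x = c * pd f i x := by
  unfold pd; rw [fderiv_const_mul hf]; simp

open MeasureTheory Real Complex
open scoped BigOperators

variable {N : ℕ}

/-- `S u w y = ∇ū·∇w` as a complex number. -/
noncomputable def Sf (u : EuclideanSpace ℝ (Fin N) → ℂ) (w : EuclideanSpace ℝ (Fin N) → ℝ)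
    (y : EuclideanSpace ℝ (Fin N)) : ℂ :=
  ∑ i, (starRingEnd ℂ) (pd u i y) * ((pd w i y : ℝ) : ℂ)

noncomputable def Pf (u : EuclideanSpace ℝ (Fin N) → ℂ) (y : EuclideanSpace ℝ (Fin N)) : ℂ :=
  ∑ i, pd u i y * (starRingEnd ℂ) (pd u i y)

noncomputable def Wf (u : EuclideanSpace ℝ (Fin N) → ℂ) (θ w : EuclideanSpace ℝ (Fin N) → ℝ)
    (j : Fin N) (y : EuclideanSpace ℝ (Fin N)) : ℂ :=
  2 * ((θ y : ℝ) : ℂ) * pd u j y * Sf u w y - Pf u y * ((θ y : ℝ) : ℂ) * ((pd w j y : ℝ) : ℂ)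

variable {u : EuclideanSpace ℝ (Fin N) → ℂ} {θ w : EuclideanSpace ℝ (Fin N) → ℝ}
  {x : EuclideanSpace ℝ (Fin N)} {j : Fin N}

lemma cd_S (hu : ContDiff ℝ (⊤:ℕ∞) u) (hw : ContDiff ℝ (⊤:ℕ∞) w) :
    ContDiff ℝ (⊤:ℕ∞) (Sf u w) := by
  unfold Sf
  exact ContDiff.sum fun i _ => (cd_conj (cd_pd hu i)).mul (cd_ofReal (cd_pd hw i))

lemma cd_P (hu : ContDiff ℝ (⊤:ℕ∞) u) : ContDiff ℝ (⊤:ℕ∞) (Pf u) := by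
  unfold Pf
  exact ContDiff.sum fun i _ => (cd_pd hu i).mul (cd_conj (cd_pd hu i))

lemma cd_W (hu : ContDiff ℝ (⊤:ℕ∞) u) (hθ : ContDiff ℝ (⊤:ℕ∞) θ)
    (hw : ContDiff ℝ (⊤:ℕ∞) w) : ContDiff ℝ (⊤:ℕ∞) (Wf u θ w j) := by
  unfold Wf
  exact (((contDiff_const.mul (cd_ofReal hθ)).mul (cd_pd hu j)).mul (cd_S hu hw)).sub
    (((cd_P hu).mul (cd_ofReal hθ)).mul (cd_ofReal (cd_pd hw j)))

lemma pd_S_eq (hu : ContDiff ℝ (⊤:ℕ∞) u) (hw : ContDiff ℝ (⊤:ℕ∞) w) :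
    pd (Sf u w) j x
      = ∑ i, ((starRingEnd ℂ) (pd (fun y => pd u i y) j x) * ((pd w i x : ℝ) : ℂ)
          + (starRingEnd ℂ) (pd u i x) * ((pd (fun y => pd w i y) j x : ℝ) : ℂ)) := by
  have h1 : ∀ i : Fin N, DifferentiableAt ℝ (fun y => (starRingEnd ℂ) (pd u i y)) x :=
    fun i => ((cd_conj (cd_pd hu i)).differentiable le1T) x
  have h2 : ∀ i : Fin N, DifferentiableAt ℝ (fun y => ((pd w i y : ℝ) : ℂ)) x :=
    fun i => ((cd_ofReal (cd_pd hw i)).differentiable le1T) x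
  have h0 : pd (Sf u w) j x
      = ∑ i, pd (fun y => (starRingEnd ℂ) (pd u i y) * ((pd w i y : ℝ) : ℂ)) j x :=
    pd_sum Finset.univ (fun i _ => (h1 i).mul (h2 i))
  rw [h0]
  refine Finset.sum_congr rfl fun i _ => ?_
  rw [pd_mul (h1 i) (h2 i), pd_conj (((cd_pd hu i).differentiable le1T) x),
    pd_ofReal (((cd_pd hw i).differentiable le1T) x)]

lemma pd_P_eq (hu : ContDiff ℝ (⊤:ℕ∞) u) :
    pd (Pf u) j x
      = ∑ i, (pd (fun y => pd u i y) j x * (starRingEnd ℂ) (pd u i x)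
          + pd u i x * (starRingEnd ℂ) (pd (fun y => pd u i y) j x)) := by
  have h1 : ∀ i : Fin N, DifferentiableAt ℝ (fun y => pd u i y) x :=
    fun i => ((cd_pd hu i).differentiable le1T) x
  have h2 : ∀ i : Fin N, DifferentiableAt ℝ (fun y => (starRingEnd ℂ) (pd u i y)) x :=
    fun i => ((cd_conj (cd_pd hu i)).differentiable le1T) x
  have h0 : pd (Pf u) j x
      = ∑ i, pd (fun y => pd u i y * (starRingEnd ℂ) (pd u i y)) j x :=
    pd_sum Finset.univ (fun i _ => (h1 i).mul (h2 i))
  rw [h0]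
  refine Finset.sum_congr rfl fun i _ => ?_
  rw [pd_mul (h1 i) (h2 i), pd_conj (h1 i)]

lemma pd_W_eq (hu : ContDiff ℝ (⊤:ℕ∞) u) (hθ : ContDiff ℝ (⊤:ℕ∞) θ)
    (hw : ContDiff ℝ (⊤:ℕ∞) w) :
    pd (Wf u θ w j) j x =
      (2 * ((pd θ j x : ℝ) : ℂ) * pd u j x
        + 2 * ((θ x : ℝ) : ℂ) * pd (fun y => pd u j y) j x) * Sf u w x
      + 2 * ((θ x : ℝ) : ℂ) * pd u j x * pd (Sf u w) j x
      - (pd (Pf u) j x * ((θ x : ℝ) : ℂ) * ((pd w j x : ℝ) : ℂ)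
         + Pf u x * (((pd θ j x : ℝ) : ℂ) * ((pd w j x : ℝ) : ℂ)
            + ((θ x : ℝ) : ℂ) * ((pd (fun y => pd w j y) j x : ℝ) : ℂ))) := by
  have dθc : DifferentiableAt ℝ (fun y => ((θ y : ℝ) : ℂ)) x :=
    ((cd_ofReal hθ).differentiable le1T) x
  have d2θc : DifferentiableAt ℝ (fun y => 2 * ((θ y : ℝ) : ℂ)) x := dθc.const_mul 2
  have dpu : DifferentiableAt ℝ (fun y => pd u j y) x := ((cd_pd hu j).differentiable le1T) x
  have dS : DifferentiableAt ℝ (Sf u w) x := ((cd_S hu hw).differentiable le1T) x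
  have dP : DifferentiableAt ℝ (Pf u) x := ((cd_P hu).differentiable le1T) x
  have dwcj : DifferentiableAt ℝ (fun y => ((pd w j y : ℝ) : ℂ)) x :=
    ((cd_ofReal (cd_pd hw j)).differentiable le1T) x
  have d12 : DifferentiableAt ℝ (fun y => 2 * ((θ y : ℝ) : ℂ) * pd u j y) x := d2θc.mul dpu
  have dθ' : DifferentiableAt ℝ θ x := (hθ.differentiable le1T) x
  have dpwj' : DifferentiableAt ℝ (pd w j) x := ((cd_pd hw j).differentiable le1T) x
  show pd (fun y => 2 * ((θ y : ℝ) : ℂ) * pd u j y * Sf u w y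
      - Pf u y * ((θ y : ℝ) : ℂ) * ((pd w j y : ℝ) : ℂ)) j x = _
  rw [pd_sub (d12.fun_mul dS) ((dP.fun_mul dθc).fun_mul dwcj),
    pd_mul d12 dS, pd_mul d2θc dpu, pd_const_mul dθc 2,
    pd_mul (dP.fun_mul dθc) dwcj, pd_mul dP dθc, pd_ofReal dθ', pd_ofReal dpwj']
  ring

lemma alg {n : ℕ} (S P : ℂ) (a : Fin n → ℂ) (b : Fin n → Fin n → ℂ)
    (hb : ∀ i j, b i j = b j i) (t : ℝ) (tθ wc : Fin n → ℝ) (w2 : Fin n → Fin n → ℝ) :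
    (∑ j, ((2 * (tθ j : ℂ) * a j + 2 * (t : ℂ) * b j j) * S
        + 2 * (t : ℂ) * a j * (∑ i, ((starRingEnd ℂ) (b i j) * (wc i : ℂ)
            + (starRingEnd ℂ) (a i) * (w2 i j : ℂ)))
        - ((∑ i, (b i j * (starRingEnd ℂ) (a i) + a i * (starRingEnd ℂ) (b i j)))
              * (t : ℂ) * (wc j : ℂ)
           + P * ((tθ j : ℂ) * (wc j : ℂ) + (t : ℂ) * (w2 j j : ℂ)))))
    = (∑ i, b i i) * (2 * (t : ℂ)) * S
      + (2 * (∑ i, a i * (tθ i : ℂ)) * S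
        + 2 * (t : ℂ) * (∑ i, ∑ j, a j * (starRingEnd ℂ) (a i) * (w2 i j : ℂ))
        - P * (∑ i, (tθ i : ℂ) * (wc i : ℂ))
        - P * (t : ℂ) * (∑ i, ((w2 i i : ℝ) : ℂ)))
      + ∑ j, ∑ i, (t : ℂ) * (a i * (starRingEnd ℂ) (b i j)
          - (starRingEnd ℂ) (a i * (starRingEnd ℂ) (b i j))) * (wc j : ℂ) := by
  have step1 : ∀ j : Fin n,
      ((2 * (tθ j : ℂ) * a j + 2 * (t : ℂ) * b j j) * S
        + 2 * (t : ℂ) * a j * (∑ i, ((starRingEnd ℂ) (b i j) * (wc i : ℂ)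
            + (starRingEnd ℂ) (a i) * (w2 i j : ℂ)))
        - ((∑ i, (b i j * (starRingEnd ℂ) (a i) + a i * (starRingEnd ℂ) (b i j)))
              * (t : ℂ) * (wc j : ℂ)
           + P * ((tθ j : ℂ) * (wc j : ℂ) + (t : ℂ) * (w2 j j : ℂ))))
      = (2 * (tθ j : ℂ) * a j * S + 2 * (t : ℂ) * b j j * S
          + (∑ i, 2 * (t : ℂ) * a j * (starRingEnd ℂ) (b i j) * (wc i : ℂ))
          + (∑ i, 2 * (t : ℂ) * a j * (starRingEnd ℂ) (a i) * (w2 i j : ℂ)))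
        - ((∑ i, b i j * (starRingEnd ℂ) (a i) * (t : ℂ) * (wc j : ℂ))
          + (∑ i, a i * (starRingEnd ℂ) (b i j) * (t : ℂ) * (wc j : ℂ))
          + P * (tθ j : ℂ) * (wc j : ℂ) + P * (t : ℂ) * (w2 j j : ℂ)) := by
    intro j
    rw [Finset.mul_sum, Finset.sum_mul, Finset.sum_mul]
    rw [show (∑ i, 2 * (t : ℂ) * a j * ((starRingEnd ℂ) (b i j) * (wc i : ℂ)
        + (starRingEnd ℂ) (a i) * (w2 i j : ℂ)))
      = ∑ i, (2 * (t : ℂ) * a j * (starRingEnd ℂ) (b i j) * (wc i : ℂ)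
        + 2 * (t : ℂ) * a j * (starRingEnd ℂ) (a i) * (w2 i j : ℂ)) from
      Finset.sum_congr rfl fun i _ => by ring]
    rw [show (∑ i, (b i j * (starRingEnd ℂ) (a i) + a i * (starRingEnd ℂ) (b i j))
          * (t : ℂ) * (wc j : ℂ))
      = ∑ i, (b i j * (starRingEnd ℂ) (a i) * (t : ℂ) * (wc j : ℂ)
        + a i * (starRingEnd ℂ) (b i j) * (t : ℂ) * (wc j : ℂ)) from
      Finset.sum_congr rfl fun i _ => by ring]
    rw [Finset.sum_add_distrib, Finset.sum_add_distrib]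
    ring
  rw [Finset.sum_congr rfl fun j _ => step1 j]
  simp only [Finset.sum_sub_distrib, Finset.sum_add_distrib]
  -- identify the pieces
  have p1 : (∑ j, 2 * (tθ j : ℂ) * a j * S) = 2 * (∑ i, a i * (tθ i : ℂ)) * S := by
    rw [Finset.mul_sum, Finset.sum_mul]
    exact Finset.sum_congr rfl fun i _ => by ring
  have p2 : (∑ j, 2 * (t : ℂ) * b j j * S) = (∑ i, b i i) * (2 * (t : ℂ)) * S := by
    rw [Finset.sum_mul, Finset.sum_mul]
    exact Finset.sum_congr rfl fun i _ => by ring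
  have p4 : (∑ j, ∑ i, 2 * (t : ℂ) * a j * (starRingEnd ℂ) (a i) * (w2 i j : ℂ))
      = 2 * (t : ℂ) * (∑ i, ∑ j, a j * (starRingEnd ℂ) (a i) * (w2 i j : ℂ)) := by
    rw [Finset.sum_comm, Finset.mul_sum]
    exact Finset.sum_congr rfl fun i _ => by
      rw [Finset.mul_sum]; exact Finset.sum_congr rfl fun j _ => by ring
  have p6 : (∑ j, P * (tθ j : ℂ) * (wc j : ℂ)) = P * (∑ i, (tθ i : ℂ) * (wc i : ℂ)) := by
    rw [Finset.mul_sum]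
    exact Finset.sum_congr rfl fun i _ => by ring
  have p7 : (∑ j, P * (t : ℂ) * (w2 j j : ℂ)) = P * (t : ℂ) * (∑ i, ((w2 i i : ℝ) : ℂ)) := by
    rw [Finset.mul_sum]
  have p3 : (∑ j, ∑ i, 2 * (t : ℂ) * a j * (starRingEnd ℂ) (b i j) * (wc i : ℂ))
      = ∑ j, ∑ i, 2 * (t : ℂ) * a i * (starRingEnd ℂ) (b i j) * (wc j : ℂ) := by
    rw [Finset.sum_comm]
    exact Finset.sum_congr rfl fun j _ => Finset.sum_congr rfl fun i _ => by
      rw [hb i j]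
  rw [p1, p2, p3, p4, p6, p7]
  have p5 : (∑ j, ∑ i, 2 * (t : ℂ) * a i * (starRingEnd ℂ) (b i j) * (wc j : ℂ))
        - ((∑ j, ∑ i, b i j * (starRingEnd ℂ) (a i) * (t : ℂ) * (wc j : ℂ))
          + (∑ j, ∑ i, a i * (starRingEnd ℂ) (b i j) * (t : ℂ) * (wc j : ℂ)))
      = ∑ j, ∑ i, (t : ℂ) * (a i * (starRingEnd ℂ) (b i j)
          - (starRingEnd ℂ) (a i * (starRingEnd ℂ) (b i j))) * (wc j : ℂ) := by
    rw [← Finset.sum_add_distrib, ← Finset.sum_sub_distrib]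
    refine Finset.sum_congr rfl fun j _ => ?_
    rw [← Finset.sum_add_distrib, ← Finset.sum_sub_distrib]
    refine Finset.sum_congr rfl fun i _ => ?_
    simp only [map_mul, Complex.conj_conj]
    ring
  linear_combination p5

variable {N : ℕ} {u : EuclideanSpace ℝ (Fin N) → ℂ} {θ w : EuclideanSpace ℝ (Fin N) → ℝ}

lemma Pf_eq_norm (x : EuclideanSpace ℝ (Fin N)) :
    Pf u x = ((∑ i, ‖pd u i x‖ ^ 2 : ℝ) : ℂ) := by
  unfold Pf
  push_cast
  exact Finset.sum_congr rfl fun i _ => by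
    rw [Complex.mul_conj]
    norm_cast
    simp [Complex.normSq_eq_norm_sq]

lemma key_pointwise (hu : ContDiff ℝ (⊤:ℕ∞) u) (hθ : ContDiff ℝ (⊤:ℕ∞) θ)
    (hw : ContDiff ℝ (⊤:ℕ∞) w) (x : EuclideanSpace ℝ (Fin N)) :
    ((∑ i, pd (fun y => pd u i y) i x) * (2 * ((θ x : ℝ) : ℂ)) *
        (∑ i, (starRingEnd ℂ) (pd u i x) * ((pd w i x : ℝ) : ℂ))).re
    + (2 * (∑ i, pd u i x * ((pd θ i x : ℝ) : ℂ)) *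
            (∑ i, (starRingEnd ℂ) (pd u i x) * ((pd w i x : ℝ) : ℂ))
          + 2 * ((θ x : ℝ) : ℂ) *
            (∑ i, ∑ j, pd u j x * (starRingEnd ℂ) (pd u i x) *
              ((pd (fun y => pd w i y) j x : ℝ) : ℂ))
          - ((∑ i, ‖pd u i x‖ ^ 2 : ℝ) : ℂ) * ((∑ i, pd θ i x * pd w i x : ℝ) : ℂ)
          - ((∑ i, ‖pd u i x‖ ^ 2 : ℝ) : ℂ) * ((θ x : ℝ) : ℂ) *
            ((∑ i, pd (fun y => pd w i y) i x : ℝ) : ℂ)).re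
    = ∑ j, pd (fun y => (Wf u θ w j y).re) j x := by
  have hre : ∀ j : Fin N, pd (fun y => (Wf u θ w j y).re) j x = (pd (Wf u θ w j) j x).re :=
    fun j => pd_re (((cd_W hu hθ hw).differentiable le1T) x)
  rw [Finset.sum_congr rfl fun j _ => hre j, ← Complex.re_sum]
  have hsum : (∑ j, pd (Wf u θ w j) j x)
      = ∑ j, ((2 * ((pd θ j x : ℝ) : ℂ) * pd u j x
            + 2 * ((θ x : ℝ) : ℂ) * pd (fun y => pd u j y) j x) * Sf u w x
          + 2 * ((θ x : ℝ) : ℂ) * pd u j x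
            * (∑ i, ((starRingEnd ℂ) (pd (fun y => pd u i y) j x) * ((pd w i x : ℝ) : ℂ)
              + (starRingEnd ℂ) (pd u i x) * ((pd (fun y => pd w i y) j x : ℝ) : ℂ)))
          - ((∑ i, (pd (fun y => pd u i y) j x * (starRingEnd ℂ) (pd u i x)
                + pd u i x * (starRingEnd ℂ) (pd (fun y => pd u i y) j x)))
                * ((θ x : ℝ) : ℂ) * ((pd w j x : ℝ) : ℂ)
             + Pf u x * (((pd θ j x : ℝ) : ℂ) * ((pd w j x : ℝ) : ℂ)
                + ((θ x : ℝ) : ℂ) * ((pd (fun y => pd w j y) j x : ℝ) : ℂ)))) :=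
    Finset.sum_congr rfl fun j _ => by
      rw [pd_W_eq hu hθ hw, pd_S_eq hu hw, pd_P_eq hu]
  rw [hsum]
  rw [show (Sf u w x) = (∑ i, (starRingEnd ℂ) (pd u i x) * ((pd w i x : ℝ) : ℂ)) from rfl]
  rw [alg (∑ i, (starRingEnd ℂ) (pd u i x) * ((pd w i x : ℝ) : ℂ)) (Pf u x)
    (fun i => pd u i x) (fun i j => pd (fun y => pd u i y) j x)
    (fun i j => pd_pd_symm hu) (θ x) (fun i => pd θ i x) (fun i => pd w i x)
    (fun i j => pd (fun y => pd w i y) j x)]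
  rw [Pf_eq_norm x]
  rw [show ((∑ i, pd θ i x * pd w i x : ℝ) : ℂ)
      = ∑ i, ((pd θ i x : ℝ) : ℂ) * ((pd w i x : ℝ) : ℂ) from by push_cast; ring]
  rw [show ((∑ i, pd (fun y => pd w i y) i x : ℝ) : ℂ)
      = ∑ i, ((pd (fun y => pd w i y) i x : ℝ) : ℂ) from by push_cast; ring]
  rw [Complex.add_re, Complex.add_re]
  have hEx : (∑ j, ∑ i, ((θ x : ℝ) : ℂ) * (pd u i x
        * (starRingEnd ℂ) (pd (fun y => pd u i y) j x)
      - (starRingEnd ℂ) (pd u i x * (starRingEnd ℂ) (pd (fun y => pd u i y) j x)))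
      * ((pd w j x : ℝ) : ℂ)).re = 0 := by
    rw [Complex.re_sum]
    refine Finset.sum_eq_zero fun j _ => ?_
    rw [Complex.re_sum]
    refine Finset.sum_eq_zero fun i _ => ?_
    simp only [Complex.mul_re, Complex.sub_re, Complex.sub_im, Complex.conj_re, Complex.conj_im,
      Complex.ofReal_re, Complex.ofReal_im]
    ring
  rw [hEx]
  ring

lemma hcs_sum {E F : Type*} [TopologicalSpace E] [NormedAddCommGroup F] {ι : Type*} (s : Finset ι)
    (f : ι → E → F) (h : ∀ i ∈ s, HasCompactSupport (f i)) :
    HasCompactSupport (fun y => ∑ i ∈ s, f i y) := by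
  classical
  induction s using Finset.induction with
  | empty => simpa using (by simp [HasCompactSupport, tsupport] :
      HasCompactSupport (fun _ : E => (0:F)))
  | @insert a s ha ih =>
      simp only [Finset.sum_insert ha]
      exact (h a (by simp)).add (ih fun i hi => h i (Finset.mem_insert_of_mem hi))

lemma hcs_sub {E : Type*} [TopologicalSpace E] {f g : E → ℂ} (hf : HasCompactSupport f)
    (hg : HasCompactSupport g) : HasCompactSupport (fun y => f y - g y) := by
  have := hf.add (hg.comp_left (g := fun z : ℂ => -z) (by simp))
  simpa [sub_eq_add_neg, Pi.add_def, Function.comp_def] using this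

end VirialAux

/-- Integration-by-parts identity:
`Re ∫ Δu · 2θ (∇ū·∇w) = −Re ∫ [2(∇u·∇θ)(∇ū·∇w) + 2θ ∂ⱼu ∂ᵢū ∂ᵢⱼw − |∇u|²(∇θ·∇w) − |∇u|² θ Δw]`. -/
theorem virial_integration_by_parts (N : ℕ) (hN : 3 ≤ N)
    (u : EuclideanSpace ℝ (Fin N) → ℂ)
    (hu : ContDiff ℝ (⊤ : ℕ∞) u) (hus : HasCompactSupport u)
    (θ w : EuclideanSpace ℝ (Fin N) → ℝ)
    (hθ : ContDiff ℝ (⊤ : ℕ∞) θ) (hw : ContDiff ℝ (⊤ : ℕ∞) w) :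
    (∫ x, (∑ i, pd (fun y => pd u i y) i x) * (2 * (θ x : ℂ)) *
        (∑ i, (starRingEnd ℂ) (pd u i x) * ((pd w i x : ℝ) : ℂ))).re =
    -(∫ x,
        (2 * (∑ i, pd u i x * ((pd θ i x : ℝ) : ℂ)) *
            (∑ i, (starRingEnd ℂ) (pd u i x) * ((pd w i x : ℝ) : ℂ))
          + 2 * (θ x : ℂ) *
            (∑ i, ∑ j, pd u j x * (starRingEnd ℂ) (pd u i x) *
              ((pd (fun y => pd w i y) j x : ℝ) : ℂ))
          - ((∑ i, ‖pd u i x‖ ^ 2 : ℝ) : ℂ) * ((∑ i, pd θ i x * pd w i x : ℝ) : ℂ)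
          - ((∑ i, ‖pd u i x‖ ^ 2 : ℝ) : ℂ) * (θ x : ℂ) *
            ((∑ i, pd (fun y => pd w i y) i x : ℝ) : ℂ))).re := by
  have hu' : ContDiff ℝ (⊤:ℕ∞) u := hu.of_le (by simp)
  have hθ' : ContDiff ℝ (⊤:ℕ∞) θ := hθ.of_le (by simp)
  have hw' : ContDiff ℝ (⊤:ℕ∞) w := hw.of_le (by simp)
  set A : EuclideanSpace ℝ (Fin N) → ℂ := fun x =>
    (∑ i, pd (fun y => pd u i y) i x) * (2 * (θ x : ℂ)) *
      (∑ i, (starRingEnd ℂ) (pd u i x) * ((pd w i x : ℝ) : ℂ)) with hA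
  set B : EuclideanSpace ℝ (Fin N) → ℂ := fun x =>
    (2 * (∑ i, pd u i x * ((pd θ i x : ℝ) : ℂ)) *
        (∑ i, (starRingEnd ℂ) (pd u i x) * ((pd w i x : ℝ) : ℂ))
      + 2 * (θ x : ℂ) *
        (∑ i, ∑ j, pd u j x * (starRingEnd ℂ) (pd u i x) *
          ((pd (fun y => pd w i y) j x : ℝ) : ℂ))
      - ((∑ i, ‖pd u i x‖ ^ 2 : ℝ) : ℂ) * ((∑ i, pd θ i x * pd w i x : ℝ) : ℂ)
      - ((∑ i, ‖pd u i x‖ ^ 2 : ℝ) : ℂ) * (θ x : ℂ) *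
        ((∑ i, pd (fun y => pd w i y) i x : ℝ) : ℂ)) with hB
  -- basic continuity / support facts
  have hcu : ∀ i, HasCompactSupport (pd u i) := fun i => hasCompactSupport_pd hus i
  have hcS : HasCompactSupport (Sf u w) :=
    hcs_sum _ _ fun i _ =>
      ((hcu i).comp_left (g := starRingEnd ℂ) (map_zero _)).mul_right
  have hcP : HasCompactSupport (Pf u) := hcs_sum _ _ fun i _ => (hcu i).mul_right
  have hcPr : HasCompactSupport (fun x : EuclideanSpace ℝ (Fin N) =>
      ((∑ i, ‖pd u i x‖ ^ 2 : ℝ) : ℂ)) :=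
    (hcs_sum _ (fun i x => ‖pd u i x‖ ^ 2)
        (fun i _ => (hcu i).comp_left (g := fun z : ℂ => ‖z‖ ^ 2) (by simp))).comp_left
      (g := fun r : ℝ => (r : ℂ)) (by simp)
  have cθc : Continuous (fun x : EuclideanSpace ℝ (Fin N) => ((θ x : ℝ) : ℂ)) :=
    Complex.continuous_ofReal.comp hθ'.continuous
  have cS : Continuous (Sf u w) := (cd_S hu' hw').continuous
  have cP : Continuous (Pf u) := (cd_P hu').continuous
  -- A : integrable
  have hcsA : HasCompactSupport A := by
    rw [hA]; exact hcS.mul_left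
  have contA : Continuous A := by
    rw [hA]
    exact ((continuous_finset_sum _ fun i _ =>
        (cd_pd (cd_pd hu' i) i).continuous).mul (continuous_const.mul cθc)).mul cS
  have hAint : Integrable A volume := contA.integrable_of_hasCompactSupport hcsA
  -- B : integrable
  have hcsB : HasCompactSupport B := by
    rw [hB]
    refine hcs_sub (hcs_sub ((hcS.mul_left).add ?_) (hcPr.mul_right)) (hcPr.mul_right.mul_right)
    exact (hcs_sum _ _ fun i _ =>
      hcs_sum _ _ fun j _ => (hcu j).mul_right.mul_right).mul_left
  have contB : Continuous B := by
    rw [hB]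
    have c1 : Continuous (fun x : EuclideanSpace ℝ (Fin N) =>
        ((∑ i, ‖pd u i x‖ ^ 2 : ℝ) : ℂ)) :=
      Complex.continuous_ofReal.comp (continuous_finset_sum _ fun i _ =>
        ((cd_pd hu' i).continuous.norm).pow 2)
    refine (((?_ : Continuous _).add ?_).sub (c1.mul ?_)).sub ((c1.mul cθc).mul ?_)
    · exact (continuous_const.mul (continuous_finset_sum _ fun i _ =>
        ((cd_pd hu' i).continuous).mul (Complex.continuous_ofReal.comp
          (cd_pd hθ' i).continuous))).mul cS
    · exact (continuous_const.mul cθc).mul (continuous_finset_sum _ fun i _ =>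
        continuous_finset_sum _ fun j _ =>
          (((cd_pd hu' j).continuous).mul
            (Complex.conjCLE.continuous.comp (cd_pd hu' i).continuous)).mul
            (Complex.continuous_ofReal.comp (cd_pd (cd_pd hw' i) j).continuous))
    · exact Complex.continuous_ofReal.comp (continuous_finset_sum _ fun i _ =>
        ((cd_pd hθ' i).continuous).mul (cd_pd hw' i).continuous)
    · exact Complex.continuous_ofReal.comp (continuous_finset_sum _ fun i _ =>
        (cd_pd (cd_pd hw' i) i).continuous)
  have hBint : Integrable B volume := contB.integrable_of_hasCompactSupport hcsB
  -- the vector field components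
  have cdV : ∀ j : Fin N, ContDiff ℝ (⊤:ℕ∞) (fun y => (Wf u θ w j y).re) := fun j =>
    Complex.reCLM.contDiff.comp (cd_W hu' hθ' hw')
  have hcsW : ∀ j : Fin N, HasCompactSupport (Wf u θ w j) := fun j => by
    unfold Wf
    exact hcs_sub (hcS.mul_left) (hcP.mul_right.mul_right)
  have hcsV : ∀ j : Fin N, HasCompactSupport (fun y => (Wf u θ w j y).re) := fun j =>
    (hcsW j).comp_left (g := Complex.re) rfl
  have intV : ∀ j : Fin N, Integrable (pd (fun y => (Wf u θ w j y).re) j) volume := fun j =>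
    ((cd_pd (cdV j) j).continuous).integrable_of_hasCompactSupport
      (hasCompactSupport_pd (hcsV j) j)
  -- the key pointwise identity
  have key : ∀ x, (A x).re + (B x).re = ∑ j, pd (fun y => (Wf u θ w j y).re) j x := by
    intro x
    simp only [hA, hB]
    exact key_pointwise hu' hθ' hw' x
  -- integrate
  have h0 : ∫ x, (∑ j, pd (fun y => (Wf u θ w j y).re) j x) = 0 := by
    rw [integral_finset_sum _ (fun j _ => intV j)]
    exact Finset.sum_eq_zero fun j _ => integral_pd_eq_zero (cdV j) (hcsV j)
  have hAre : Integrable (fun x => (A x).re) volume := by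
    have := hAint.re
    simpa [RCLike.re_eq_complex_re] using this
  have hBre : Integrable (fun x => (B x).re) volume := by
    have := hBint.re
    simpa [RCLike.re_eq_complex_re] using this
  have h1 : (∫ x, (A x).re) + (∫ x, (B x).re) = 0 := by
    rw [← integral_add hAre hBre]
    rw [show (fun x => (A x).re + (B x).re)
        = fun x => ∑ j, pd (fun y => (Wf u θ w j y).re) j x from funext key]
    exact h0
  have hre1 : (∫ x, A x).re = ∫ x, (A x).re := by
    rw [← RCLike.re_eq_complex_re]
    exact (integral_re hAint).symm
  have hre2 : (∫ x, B x).re = ∫ x, (B x).re := by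
    rw [← RCLike.re_eq_complex_re]
    exact (integral_re hBint).symm
  rw [hre1, hre2]
  linarith
end
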